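/- Let S be a subsemigroup of a bisimple inverse ω-semigroup Q such that S is a left I-order in Q. Then S satisfies: (A) there is a semigroup homomorphism φ: S → 𝓑 such that the image Sφ is a left I-order in 𝓑; and, writing aφ = (r(a), l(a)), (B)(i) for x, y, a ∈ S, if l(x) ≥ r(a), l(y) ≥ r(a) and xa = ya then x = y; (B)(ii) for x, y, a ∈ S, if r(x) ≥ l(a), r(y) ≥ l(a) and ax = ay then x = y; (C) for any b, c ∈ S there exist x, y ∈ S with xb = yc, r(x) = r(y), l(x) = r(b) − l(b) + max(l(b), l(c)) and l(y) = r(c) − l(c) + max(l(b), l(c)). -/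

import Mathlib

/-- Green's relation `𝓡`. -/
def GreenR {Q : Type*} [Mul Q] (a b : Q) : Prop :=
  a = b ∨ ∃ x y : Q, a * x = b ∧ b * y = a

/-- Green's relation `𝓛`. -/
def GreenL {Q : Type*} [Mul Q] (a b : Q) : Prop :=
  a = b ∨ ∃ x y : Q, x * a = b ∧ y * b = a

/-- Green's relation `𝓓`. -/
def GreenD {Q : Type*} [Mul Q] (a b : Q) : Prop :=
  ∃ c : Q, GreenR a c ∧ GreenL c b

/-- `Q` is an inverse semigroup with inverse map `inv`: every `q` has `inv q` as its
unique (semigroup-theoretic) inverse. -/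
def IsInverseSg (Q : Type*) [Mul Q] (inv : Q → Q) : Prop :=
  ∀ q : Q, (q * inv q * q = q ∧ inv q * q * inv q = inv q) ∧
    ∀ x : Q, q * x * q = q → x * q * x = x → x = inv q

/-- `Q` is bisimple: any two elements are `𝓓`-related. -/
def IsBisimple (Q : Type*) [Mul Q] : Prop := ∀ a b : Q, GreenD a b

/-- The idempotents of `Q` are exactly `e 0 > e 1 > e 2 > ⋯`, an ω-chain
(ordering `e ≤ f ↔ e * f = f * e = e`). -/
def IsOmegaChain (Q : Type*) [Mul Q] (e : ℕ → Q) : Prop :=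
  (∀ n, e n * e n = e n) ∧
  (∀ q : Q, q * q = q → ∃ n, q = e n) ∧
  (∀ n, e (n + 1) * e n = e (n + 1) ∧ e n * e (n + 1) = e (n + 1)) ∧
  Function.Injective e

/-- `T` is a left I-order in `Q` (with inverse map `inv`): every element of `Q` is
of the form `inv a * b` with `a, b ∈ T`. -/
def IsLeftIOrder {Q : Type*} [Mul Q] (inv : Q → Q) (T : Set Q) : Prop :=
  ∀ q : Q, ∃ a ∈ T, ∃ b ∈ T, q = inv a * b

/-- The bicyclic semigroup `𝓑` carried by `ℕ × ℕ`, an element being `(r, l)`;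
`(m,n)(p,q) = (m - n + t, q - p + t)` with `t = max n p`. -/
structure Bicyclic where
  r : ℕ
  l : ℕ

instance : Mul Bicyclic :=
  ⟨fun x y => ⟨x.r + (max x.l y.r - x.l), y.l + (max x.l y.r - y.r)⟩⟩

/-- The inverse `(m,n)⁻¹ = (n,m)` in the bicyclic semigroup. -/
def Bicyclic.inv (x : Bicyclic) : Bicyclic := ⟨x.l, x.r⟩

/-- `T` is a left I-order in the bicyclic semigroup `𝓑`. -/
def IsLeftIOrderBic (T : Set Bicyclic) : Prop :=
  ∀ q : Bicyclic, ∃ a ∈ T, ∃ b ∈ T, q = a.inv * b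

/-- `r a`, the first coordinate of `φ a` in `𝓑`. -/
def rr {S : Type*} [Mul S] (φ : S →ₙ* Bicyclic) (a : S) : ℕ := (φ a).r

/-- `l a`, the second coordinate of `φ a` in `𝓑`. -/
def ll {S : Type*} [Mul S] (φ : S →ₙ* Bicyclic) (a : S) : ℕ := (φ a).l

/-- Condition (A): the image of `φ` is a left I-order in `𝓑`. -/
def CondA {S : Type*} [Mul S] (φ : S →ₙ* Bicyclic) : Prop :=
  IsLeftIOrderBic (Set.range (⇑φ))

/-- Condition (B)(i): if `l x, l y ≥ r a` and `x * a = y * a` then `x = y`. -/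
def CondBi {S : Type*} [Mul S] (φ : S →ₙ* Bicyclic) : Prop :=
  ∀ x y a : S, rr φ a ≤ ll φ x → rr φ a ≤ ll φ y → x * a = y * a → x = y

/-- Condition (B)(ii): if `r x, r y ≥ l a` and `a * x = a * y` then `x = y`. -/
def CondBii {S : Type*} [Mul S] (φ : S →ₙ* Bicyclic) : Prop :=
  ∀ x y a : S, ll φ a ≤ rr φ x → ll φ a ≤ rr φ y → a * x = a * y → x = y

/-- Condition (C): for all `b c` there are `x y` with `x * b = y * c`,
`r x = r y`, `l x = r b - l b + max (l b) (l c)` and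
`l y = r c - l c + max (l b) (l c)`. -/
def CondC {S : Type*} [Mul S] (φ : S →ₙ* Bicyclic) : Prop :=
  ∀ b c : S, ∃ x y : S, x * b = y * c ∧ rr φ x = rr φ y ∧
    ll φ x = rr φ b + (max (ll φ b) (ll φ c) - ll φ b) ∧
    ll φ y = rr φ c + (max (ll φ b) (ll φ c) - ll φ c)

/-!
Send `q` to `(m, n)`, where `q q⁻¹ = e m` and `q⁻¹ q = e n`. Conjugation `x ↦ a x a⁻¹` maps the
idempotents below `a⁻¹ a` monotonically onto those below `a a⁻¹`, with inverse `y ↦ a⁻¹ y a`;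
since both are ω-chains this forces `a e_{n+k} a⁻¹ = e_{m+k}`, which is exactly what makes the
map a homomorphism to the bicyclic semigroup, surjective when `Q` is bisimple.
Conditions (B) are cancellation by `a a⁻¹` and `a⁻¹ a`. For (C) write `b c⁻¹ = u⁻¹ v` with
`u, v ∈ S` and take `x = s u`, `y = s v` for some `s ∈ S` with `s⁻¹ s = e (max (r u) (r v))`.
-/

open Function

theorem apply_add_eq_add_of_comp_eq_max {F G : ℕ → ℕ} {m n : ℕ} (hF : Monotone F)
    (hG : Monotone G) (hGF : ∀ j, G (F j) = max n j) (hFG : ∀ i, F (G i) = max m i)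
    (hn : F n = m) (k : ℕ) : F (n + k) = m + k := by
  induction k with
  | zero => exact hn
  | succ k ih =>
    show F (n + k + 1) = m + k + 1
    have hGm : G (m + k) = n + k := by rw [← ih, hGF]; omega
    have hlow : m + k < F (n + k + 1) := by
      refine lt_of_le_of_ne (ih ▸ hF (Nat.le_succ _)) fun heq => ?_
      have := hGF (n + k + 1)
      rw [← heq, hGm] at this
      omega
    have hup : n + k < G (m + k + 1) := by
      refine lt_of_le_of_ne (hGm ▸ hG (Nat.le_succ _)) fun heq => ?_
      have := hFG (m + k + 1)
      rw [← heq, ih] at this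
      omega
    have := hF (show n + k + 1 ≤ G (m + k + 1) from hup)
    rw [hFG] at this
    omega

namespace IsOmegaChain

variable {Q : Type*} [Semigroup Q] {e : ℕ → Q}

theorem e_mul_e_of_le (h : IsOmegaChain Q e) {m n : ℕ} (hmn : m ≤ n) :
    e m * e n = e n ∧ e n * e m = e n := by
  induction n, hmn using Nat.le_induction with
  | base => exact ⟨h.1 m, h.1 m⟩
  | succ n _ ih =>
    obtain ⟨hl, hr⟩ := h.2.2.1 n
    constructor
    · calc e m * e (n + 1) = e m * e n * e (n + 1) := by rw [mul_assoc, hr]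
        _ = e (n + 1) := by rw [ih.1, hr]
    · calc e (n + 1) * e m = e (n + 1) * (e n * e m) := by rw [← mul_assoc, hl]
        _ = e (n + 1) := by rw [ih.2, hl]

theorem e_mul_e (h : IsOmegaChain Q e) (m n : ℕ) : e m * e n = e (max m n) := by
  rcases le_total m n with hmn | hnm
  · rw [max_eq_right hmn, (h.e_mul_e_of_le hmn).1]
  · rw [max_eq_left hnm, (h.e_mul_e_of_le hnm).2]

theorem e_invFun (h : IsOmegaChain Q e) {x : Q} (hx : x * x = x) : e (invFun e x) = x :=
  invFun_eq ((h.2.1 x hx).imp fun _ hn => hn.symm)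

theorem invFun_e (h : IsOmegaChain Q e) (n : ℕ) : invFun e (e n) = n :=
  leftInverse_invFun h.2.2.2 n

theorem mul_comm_of_idempotent (h : IsOmegaChain Q e) {x y : Q} (hx : x * x = x)
    (hy : y * y = y) : x * y = y * x := by
  rw [← h.e_invFun hx, ← h.e_invFun hy, h.e_mul_e, h.e_mul_e, max_comm]

end IsOmegaChain

namespace IsInverseSg

variable {Q : Type*} [Semigroup Q] {inv : Q → Q}

theorem mul_inv_mul (h : IsInverseSg Q inv) (q : Q) : q * inv q * q = q := (h q).1.1

theorem inv_mul_inv (h : IsInverseSg Q inv) (q : Q) : inv q * q * inv q = inv q := (h q).1.2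

theorem inv_inv (h : IsInverseSg Q inv) (q : Q) : inv (inv q) = q :=
  ((h (inv q)).2 q (h.inv_mul_inv q) (h.mul_inv_mul q)).symm

theorem mul_inv_idempotent (h : IsInverseSg Q inv) (q : Q) :
    q * inv q * (q * inv q) = q * inv q := by
  rw [← mul_assoc, h.mul_inv_mul]

theorem inv_mul_idempotent (h : IsInverseSg Q inv) (q : Q) :
    inv q * q * (inv q * q) = inv q * q := by
  rw [← mul_assoc, h.inv_mul_inv]

theorem inv_eq_self_of_idempotent (h : IsInverseSg Q inv) {x : Q} (hx : x * x = x) :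
    inv x = x :=
  ((h x).2 x (by rw [hx, hx]) (by rw [hx, hx])).symm

theorem inv_mul_rev (h : IsInverseSg Q inv)
    (hcomm : ∀ x y : Q, x * x = x → y * y = y → x * y = y * x) (a b : Q) :
    inv (a * b) = inv b * inv a := by
  have hba : b * inv b * (inv a * a) = inv a * a * (b * inv b) :=
    hcomm _ _ (h.mul_inv_idempotent b) (h.inv_mul_idempotent a)
  refine ((h (a * b)).2 _ ?_ ?_).symm
  · calc a * b * (inv b * inv a) * (a * b)
          = a * (b * inv b * (inv a * a)) * b := by simp only [mul_assoc]
      _ = a * inv a * a * (b * inv b * b) := by rw [hba]; simp only [mul_assoc]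
      _ = a * b := by rw [h.mul_inv_mul, h.mul_inv_mul]
  · calc inv b * inv a * (a * b) * (inv b * inv a)
          = inv b * (inv a * a * (b * inv b)) * inv a := by simp only [mul_assoc]
      _ = inv b * b * inv b * (inv a * a * inv a) := by rw [← hba]; simp only [mul_assoc]
      _ = inv b * inv a := by rw [h.inv_mul_inv, h.inv_mul_inv]

end IsInverseSg

structure IsInverseOmegaSemigroup (Q : Type*) [Semigroup Q] (inv : Q → Q) (e : ℕ → Q) :
    Prop where
  isInverseSg : IsInverseSg Q inv
  isOmegaChain : IsOmegaChain Q e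

section Indices

variable {Q : Type*} [Mul Q]

noncomputable def rIndex (inv : Q → Q) (e : ℕ → Q) (q : Q) : ℕ := invFun e (q * inv q)

noncomputable def lIndex (inv : Q → Q) (e : ℕ → Q) (q : Q) : ℕ := invFun e (inv q * q)

noncomputable def conjIndex (inv : Q → Q) (e : ℕ → Q) (a : Q) (j : ℕ) : ℕ :=
  invFun e (a * e j * inv a)

noncomputable def toBicyclic (inv : Q → Q) (e : ℕ → Q) (q : Q) : Bicyclic :=
  ⟨rIndex inv e q, lIndex inv e q⟩

end Indices

namespace IsInverseOmegaSemigroup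

variable {Q : Type*} [Semigroup Q] {inv : Q → Q} {e : ℕ → Q}

theorem inv_mul_rev (h : IsInverseOmegaSemigroup Q inv e) (a b : Q) :
    inv (a * b) = inv b * inv a :=
  h.isInverseSg.inv_mul_rev (fun _ _ => h.isOmegaChain.mul_comm_of_idempotent) a b

theorem mul_inv_eq (h : IsInverseOmegaSemigroup Q inv e) (q : Q) :
    q * inv q = e (rIndex inv e q) :=
  (h.isOmegaChain.e_invFun (h.isInverseSg.mul_inv_idempotent q)).symm

theorem inv_mul_eq (h : IsInverseOmegaSemigroup Q inv e) (q : Q) :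
    inv q * q = e (lIndex inv e q) :=
  (h.isOmegaChain.e_invFun (h.isInverseSg.inv_mul_idempotent q)).symm

theorem rIndex_eq_of_mul_inv_eq (h : IsInverseOmegaSemigroup Q inv e) {q : Q} {k : ℕ}
    (hq : q * inv q = e k) : rIndex inv e q = k := by
  rw [rIndex, hq, h.isOmegaChain.invFun_e]

theorem lIndex_eq_of_inv_mul_eq (h : IsInverseOmegaSemigroup Q inv e) {q : Q} {k : ℕ}
    (hq : inv q * q = e k) : lIndex inv e q = k := by
  rw [lIndex, hq, h.isOmegaChain.invFun_e]

theorem rIndex_inv (h : IsInverseOmegaSemigroup Q inv e) (q : Q) :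
    rIndex inv e (inv q) = lIndex inv e q := by
  rw [rIndex, lIndex, h.isInverseSg.inv_inv]

theorem lIndex_inv (h : IsInverseOmegaSemigroup Q inv e) (q : Q) :
    lIndex inv e (inv q) = rIndex inv e q := by
  rw [rIndex, lIndex, h.isInverseSg.inv_inv]

theorem rIndex_e (h : IsInverseOmegaSemigroup Q inv e) (n : ℕ) : rIndex inv e (e n) = n :=
  h.rIndex_eq_of_mul_inv_eq <| by
    rw [h.isInverseSg.inv_eq_self_of_idempotent (h.isOmegaChain.1 n), h.isOmegaChain.1 n]

theorem lIndex_e (h : IsInverseOmegaSemigroup Q inv e) (n : ℕ) : lIndex inv e (e n) = n :=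
  h.lIndex_eq_of_inv_mul_eq <| by
    rw [h.isInverseSg.inv_eq_self_of_idempotent (h.isOmegaChain.1 n), h.isOmegaChain.1 n]

theorem mul_e_lIndex (h : IsInverseOmegaSemigroup Q inv e) (q : Q) :
    q * e (lIndex inv e q) = q := by
  rw [← h.inv_mul_eq, ← mul_assoc, h.isInverseSg.mul_inv_mul]

theorem e_rIndex_mul (h : IsInverseOmegaSemigroup Q inv e) (q : Q) :
    e (rIndex inv e q) * q = q := by
  rw [← h.mul_inv_eq, h.isInverseSg.mul_inv_mul]

theorem mul_e_max_lIndex (h : IsInverseOmegaSemigroup Q inv e) (q : Q) (k : ℕ) :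
    q * e (max (lIndex inv e q) k) = q * e k := by
  rw [← h.isOmegaChain.e_mul_e, ← mul_assoc, h.mul_e_lIndex]

theorem mul_e_of_le (h : IsInverseOmegaSemigroup Q inv e) {q : Q} {k : ℕ}
    (hk : k ≤ lIndex inv e q) : q * e k = q := by
  rw [← h.mul_e_max_lIndex, max_eq_left hk, h.mul_e_lIndex]

theorem e_mul_of_le (h : IsInverseOmegaSemigroup Q inv e) {q : Q} {k : ℕ}
    (hk : k ≤ rIndex inv e q) : e k * q = q := by
  calc e k * q = e k * (e (rIndex inv e q) * q) := by rw [h.e_rIndex_mul]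
    _ = q := by rw [← mul_assoc, h.isOmegaChain.e_mul_e, max_eq_right hk, h.e_rIndex_mul]

theorem conj_e_mul_conj_e (h : IsInverseOmegaSemigroup Q inv e) (a : Q) (i j : ℕ) :
    a * e i * inv a * (a * e j * inv a) = a * e (max i j) * inv a := by
  set n := lIndex inv e a
  calc a * e i * inv a * (a * e j * inv a) = a * (e i * (inv a * a) * e j) * inv a := by
        simp only [mul_assoc]
    _ = a * e (max n (max i j)) * inv a := by
        rw [h.inv_mul_eq, h.isOmegaChain.e_mul_e, h.isOmegaChain.e_mul_e, max_comm i n,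
          max_assoc]
    _ = a * e (max i j) * inv a := by rw [h.mul_e_max_lIndex]

theorem e_conjIndex (h : IsInverseOmegaSemigroup Q inv e) (a : Q) (j : ℕ) :
    e (conjIndex inv e a j) = a * e j * inv a :=
  h.isOmegaChain.e_invFun (by rw [h.conj_e_mul_conj_e, max_self])

theorem conjIndex_max (h : IsInverseOmegaSemigroup Q inv e) (a : Q) (i j : ℕ) :
    conjIndex inv e a (max i j) = max (conjIndex inv e a i) (conjIndex inv e a j) :=
  h.isOmegaChain.2.2.2 <| by
    rw [← h.isOmegaChain.e_mul_e (conjIndex inv e a i), h.e_conjIndex, h.e_conjIndex,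
      h.e_conjIndex, h.conj_e_mul_conj_e]

theorem monotone_conjIndex (h : IsInverseOmegaSemigroup Q inv e) (a : Q) :
    Monotone (conjIndex inv e a) := fun i j hij => by
  have := h.conjIndex_max a i j
  rw [max_eq_right hij] at this
  exact this ▸ le_max_left _ _

theorem conjIndex_inv_conjIndex (h : IsInverseOmegaSemigroup Q inv e) (a : Q) (j : ℕ) :
    conjIndex inv e (inv a) (conjIndex inv e a j) = max (lIndex inv e a) j :=
  h.isOmegaChain.2.2.2 <| by
    rw [h.e_conjIndex, h.e_conjIndex, h.isInverseSg.inv_inv]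
    calc inv a * (a * e j * inv a) * a = inv a * a * e j * (inv a * a) := by
          simp only [mul_assoc]
      _ = e (max (lIndex inv e a) j) := by
          rw [h.inv_mul_eq, h.isOmegaChain.e_mul_e, h.isOmegaChain.e_mul_e, max_right_comm,
            max_self]

theorem conjIndex_lIndex (h : IsInverseOmegaSemigroup Q inv e) (a : Q) :
    conjIndex inv e a (lIndex inv e a) = rIndex inv e a := by
  rw [conjIndex, h.mul_e_lIndex, rIndex]

theorem conjIndex_lIndex_add (h : IsInverseOmegaSemigroup Q inv e) (a : Q) (k : ℕ) :
    conjIndex inv e a (lIndex inv e a + k) = rIndex inv e a + k := by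
  refine apply_add_eq_add_of_comp_eq_max (h.monotone_conjIndex a)
    (h.monotone_conjIndex (inv a)) (h.conjIndex_inv_conjIndex a) (fun i => ?_)
    (h.conjIndex_lIndex a) k
  simpa only [h.isInverseSg.inv_inv, h.lIndex_inv] using h.conjIndex_inv_conjIndex (inv a) i

theorem conj_e (h : IsInverseOmegaSemigroup Q inv e) (a : Q) (j : ℕ) :
    a * e j * inv a = e (rIndex inv e a + (j - lIndex inv e a)) := by
  have hj : max (lIndex inv e a) j = lIndex inv e a + (j - lIndex inv e a) := by omega
  rw [← h.mul_e_max_lIndex a j, hj, ← h.e_conjIndex, h.conjIndex_lIndex_add]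

theorem rIndex_mul (h : IsInverseOmegaSemigroup Q inv e) (p q : Q) :
    rIndex inv e (p * q) = rIndex inv e p + (rIndex inv e q - lIndex inv e p) :=
  h.rIndex_eq_of_mul_inv_eq <| by
    rw [h.inv_mul_rev, ← h.conj_e, ← h.mul_inv_eq]
    simp only [mul_assoc]

theorem lIndex_mul (h : IsInverseOmegaSemigroup Q inv e) (p q : Q) :
    lIndex inv e (p * q) = lIndex inv e q + (lIndex inv e p - rIndex inv e q) := by
  rw [← h.rIndex_inv, h.inv_mul_rev, h.rIndex_mul, h.rIndex_inv, h.rIndex_inv, h.lIndex_inv]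

theorem toBicyclic_mul (h : IsInverseOmegaSemigroup Q inv e) (p q : Q) :
    toBicyclic inv e (p * q) = toBicyclic inv e p * toBicyclic inv e q := by
  show Bicyclic.mk _ _ = Bicyclic.mk _ _
  dsimp only [toBicyclic]
  rw [h.rIndex_mul, h.lIndex_mul]
  congr 1 <;> omega

theorem toBicyclic_inv (h : IsInverseOmegaSemigroup Q inv e) (q : Q) :
    toBicyclic inv e (inv q) = (toBicyclic inv e q).inv := by
  rw [toBicyclic, h.rIndex_inv, h.lIndex_inv]
  rfl

noncomputable def toBicyclicHom (h : IsInverseOmegaSemigroup Q inv e) : Q →ₙ* Bicyclic :=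
  ⟨toBicyclic inv e, h.toBicyclic_mul⟩

theorem rIndex_eq_of_greenR (h : IsInverseOmegaSemigroup Q inv e) {a b : Q} (hab : GreenR a b) :
    rIndex inv e a = rIndex inv e b := by
  rcases hab with rfl | ⟨x, y, rfl, hy⟩
  · rfl
  · refine le_antisymm ?_ ?_
    · rw [h.rIndex_mul]; exact Nat.le_add_right _ _
    · conv_rhs => rw [← hy, h.rIndex_mul]
      exact Nat.le_add_right _ _

theorem lIndex_eq_of_greenL (h : IsInverseOmegaSemigroup Q inv e) {a b : Q} (hab : GreenL a b) :
    lIndex inv e a = lIndex inv e b := by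
  rcases hab with rfl | ⟨x, y, rfl, hy⟩
  · rfl
  · refine le_antisymm ?_ ?_
    · rw [h.lIndex_mul]; exact Nat.le_add_right _ _
    · conv_rhs => rw [← hy, h.lIndex_mul]
      exact Nat.le_add_right _ _

theorem surjective_toBicyclic (h : IsInverseOmegaSemigroup Q inv e) (hbis : IsBisimple Q) :
    Surjective (toBicyclic inv e) := fun q => by
  obtain ⟨w, hR, hL⟩ := hbis (e q.r) (e q.l)
  refine ⟨w, ?_⟩
  rw [toBicyclic, ← h.rIndex_eq_of_greenR hR, h.lIndex_eq_of_greenL hL, h.rIndex_e, h.lIndex_e]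

theorem condA_toBicyclicHom_comp (h : IsInverseOmegaSemigroup Q inv e) (hbis : IsBisimple Q)
    {S : Subsemigroup Q} (hS : IsLeftIOrder inv (S : Set Q)) :
    CondA (h.toBicyclicHom.comp (MulMemClass.subtype S)) := fun q => by
  obtain ⟨w, rfl⟩ := h.surjective_toBicyclic hbis q
  obtain ⟨a, ha, b, hb, rfl⟩ := hS w
  refine ⟨_, ⟨⟨a, ha⟩, rfl⟩, _, ⟨⟨b, hb⟩, rfl⟩, ?_⟩
  show toBicyclic inv e (inv a * b) = (toBicyclic inv e a).inv * toBicyclic inv e b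
  rw [h.toBicyclic_mul, h.toBicyclic_inv]

theorem mul_right_cancel_of_rIndex_le (h : IsInverseOmegaSemigroup Q inv e) {x y a : Q}
    (hx : rIndex inv e a ≤ lIndex inv e x) (hy : rIndex inv e a ≤ lIndex inv e y)
    (hxy : x * a = y * a) : x = y :=
  calc x = x * (a * inv a) := by rw [h.mul_inv_eq, h.mul_e_of_le hx]
    _ = y * (a * inv a) := by rw [← mul_assoc, hxy, mul_assoc]
    _ = y := by rw [h.mul_inv_eq, h.mul_e_of_le hy]

theorem mul_left_cancel_of_lIndex_le (h : IsInverseOmegaSemigroup Q inv e) {x y a : Q}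
    (hx : lIndex inv e a ≤ rIndex inv e x) (hy : lIndex inv e a ≤ rIndex inv e y)
    (hxy : a * x = a * y) : x = y :=
  calc x = inv a * a * x := by rw [h.inv_mul_eq, h.e_mul_of_le hx]
    _ = inv a * a * y := by rw [mul_assoc, hxy, ← mul_assoc]
    _ = y := by rw [h.inv_mul_eq, h.e_mul_of_le hy]

theorem exists_mem_lIndex_eq (h : IsInverseOmegaSemigroup Q inv e) {T : Set Q}
    (hT : IsLeftIOrder inv T) (k : ℕ) : ∃ s ∈ T, lIndex inv e s = k := by
  obtain ⟨u, hu, v, hv, huv⟩ := hT (e k)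
  have hr := congrArg (rIndex inv e) huv
  have hl := congrArg (lIndex inv e) huv
  rw [h.rIndex_e, h.rIndex_mul, h.rIndex_inv, h.lIndex_inv] at hr
  rw [h.lIndex_e, h.lIndex_mul, h.lIndex_inv] at hl
  rcases le_total (rIndex inv e v) (rIndex inv e u) with hvu | huv
  · exact ⟨u, hu, by omega⟩
  · exact ⟨v, hv, by omega⟩

theorem exists_mem_mul_eq_mul (h : IsInverseOmegaSemigroup Q inv e) {S : Subsemigroup Q}
    (hS : IsLeftIOrder inv (S : Set Q)) (b c : Q) :
    ∃ x ∈ S, ∃ y ∈ S, x * b = y * c ∧ rIndex inv e x = rIndex inv e y ∧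
      lIndex inv e x =
        rIndex inv e b + (max (lIndex inv e b) (lIndex inv e c) - lIndex inv e b) ∧
      lIndex inv e y =
        rIndex inv e c + (max (lIndex inv e b) (lIndex inv e c) - lIndex inv e c) := by
  obtain ⟨u, hu, v, hv, huv⟩ := hS (b * inv c)
  obtain ⟨s, hs, hsl⟩ := h.exists_mem_lIndex_eq hS (max (rIndex inv e u) (rIndex inv e v))
  have hr := congrArg (rIndex inv e) huv
  have hl := congrArg (lIndex inv e) huv
  simp only [h.rIndex_mul, h.lIndex_mul, h.rIndex_inv, h.lIndex_inv] at hr hl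
  have hc : lIndex inv e c ≤ lIndex inv e (s * u * b) := by
    rw [h.lIndex_mul, h.lIndex_mul, hsl]
    omega
  have hsub : s * u * b = s * v * c :=
    calc s * u * b = s * u * b * (inv c * c) := by rw [h.inv_mul_eq, h.mul_e_of_le hc]
      _ = s * (u * (b * inv c)) * c := by simp only [mul_assoc]
      _ = s * (u * inv u) * v * c := by rw [huv]; simp only [mul_assoc]
      _ = s * v * c := by rw [h.mul_inv_eq, h.mul_e_of_le (hsl ▸ le_max_left _ _)]
  refine ⟨s * u, S.mul_mem hs hu, s * v, S.mul_mem hs hv, hsub, ?_, ?_, ?_⟩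
  · rw [h.rIndex_mul, h.rIndex_mul, hsl]
    omega
  · rw [h.lIndex_mul, hsl]
    omega
  · rw [h.lIndex_mul, hsl]
    omega

end IsInverseOmegaSemigroup

/-- A left I-order `S` in a bisimple inverse ω-semigroup satisfies conditions
(A), (B)(i), (B)(ii), (C). -/
theorem stmt5 {Q : Type*} [Semigroup Q] (inv : Q → Q) (e : ℕ → Q)
    (hinv : IsInverseSg Q inv) (hbis : IsBisimple Q) (hchain : IsOmegaChain Q e)
    (S : Subsemigroup Q) (hS : IsLeftIOrder inv (S : Set Q)) :
    ∃ φ : S →ₙ* Bicyclic, CondA φ ∧ CondBi φ ∧ CondBii φ ∧ CondC φ := by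
  have h : IsInverseOmegaSemigroup Q inv e := ⟨hinv, hchain⟩
  refine ⟨h.toBicyclicHom.comp (MulMemClass.subtype S), h.condA_toBicyclicHom_comp hbis hS,
    fun x y a hx hy hxy => ?_, fun x y a hx hy hxy => ?_, fun b c => ?_⟩
  · exact Subtype.ext (h.mul_right_cancel_of_rIndex_le hx hy (congrArg Subtype.val hxy))
  · exact Subtype.ext (h.mul_left_cancel_of_lIndex_le hx hy (congrArg Subtype.val hxy))
  · obtain ⟨x, hx, y, hy, hxy, hr, hlx, hly⟩ := h.exists_mem_mul_eq_mul hS b c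
    exact ⟨⟨x, hx⟩, ⟨y, hy⟩, Subtype.ext hxy, hr, hlx, hly⟩
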